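/- arXiv:math/9905055 — 3 statements merged into one kernel-verified Lean document; each statement's English description precedes it below -/
import Mathlib

section
/- The map π : spec R → X-spec R, P ↦ (P : X), satisfies: (a) π is continuous; (b) π maps π-stable closed subsets of spec R to closed subsets of X-spec R; (c) π is a topological quotient map, i.e., π is surjective and a subset V ⊆ X-spec R is closed if and only if π^{-1}(V) is closed in spec R. -/
/-- An ideal (i.e. left ideal) of a not-necessarily-commutative ring is two-sided. -/
def IsTwoSidedI {R : Type*} [Ring R] (I : Ideal R) : Prop :=
  ∀ a ∈ I, ∀ r : R, a * r ∈ I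

/-- A (two-sided) ideal `P` is prime: it is proper and `IJ ⊆ P` forces `I ⊆ P` or `J ⊆ P`
for all two-sided ideals `I`, `J`. -/
def IsPrimeTS {R : Type*} [Ring R] (P : Ideal R) : Prop :=
  IsTwoSidedI P ∧ P ≠ ⊤ ∧
    ∀ I J : Ideal R, IsTwoSidedI I → IsTwoSidedI J →
      (∀ a ∈ I, ∀ b ∈ J, a * b ∈ P) → I ≤ P ∨ J ≤ P

/-- `J` is `X`-semiprime: an intersection of a collection of `X`-prime ideals. -/
def IsXSemiprime {R : Type*} [Ring R] (𝒳 : Set (Ideal R)) (J : Ideal R) : Prop :=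
  ∃ T ⊆ 𝒳, J = sInf T

/-!
A prime `P` over a two-sided ideal `I` of a noetherian ring contains one of finitely many primes
over `I` (noetherian induction: if `I` is not prime, some `AB ⊆ I` with `A, B ⊄ I`, and every
prime over `I` lies over `I + A` or `I + B`). So minimal primes exist below every prime over `I`,
which by assumption (b) makes `π` surjective, and `(P : X)` for `P ∈ V(I)` is bounded below by the
`X`-semiprime ideal `J = ⋂ (Pᵢ : X)` over that finite family. Conversely, if `Q ⊇ J` is `X`-prime,
a minimal prime `m` over `Q` contains some `(Pᵢ : X)`, hence a minimal prime `m'` over `(Pᵢ : X)`,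
which lies in `V(I)` when `V(I)` is `π`-stable; thus `π(V(I)) = V_X(J)`. Continuity is the
equality `π⁻¹(V_X(I)) = V(⋂ V_X(I))`, i.e. assumption (a).
-/

section

variable {R : Type*} [Ring R]

theorem IsTwoSidedI.sInf {T : Set (Ideal R)} (hT : ∀ A ∈ T, IsTwoSidedI A) :
    IsTwoSidedI (sInf T) := fun a ha r =>
  Submodule.mem_sInf.2 fun A hA => hT A hA a (Submodule.mem_sInf.1 ha A hA) r

theorem IsTwoSidedI.sup {I A : Ideal R} (hI : IsTwoSidedI I) (hA : IsTwoSidedI A) :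
    IsTwoSidedI (I ⊔ A) := by
  intro x hx r
  obtain ⟨i, hi, a, ha, rfl⟩ := Submodule.mem_sup.1 hx
  exact Submodule.mem_sup.2 ⟨i * r, hI i hi r, a * r, hA a ha r, (add_mul i a r).symm⟩

theorem le_of_sup_eq_top {I A B : Ideal R} (hI : IsTwoSidedI I)
    (hAB : ∀ a ∈ A, ∀ b ∈ B, a * b ∈ I) (htop : I ⊔ A = ⊤) : B ≤ I := by
  obtain ⟨i, hi, a, ha, hia⟩ := Submodule.mem_sup.1 (htop ▸ Submodule.mem_top : (1 : R) ∈ I ⊔ A)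
  intro b hb
  rw [← one_mul b, ← hia, add_mul]
  exact I.add_mem (hI i hi b) (hAB a ha b hb)

theorem exists_of_not_isPrimeTS {I : Ideal R} (hI : IsTwoSidedI I) (htop : I ≠ ⊤)
    (hprime : ¬IsPrimeTS I) :
    ∃ A B : Ideal R, IsTwoSidedI A ∧ IsTwoSidedI B ∧ (∀ a ∈ A, ∀ b ∈ B, a * b ∈ I) ∧
      ¬A ≤ I ∧ ¬B ≤ I := by
  simpa [IsPrimeTS, hI, htop] using hprime

theorem IsPrimeTS.le_or_le_of_inf_le {P A B : Ideal R} (hP : IsPrimeTS P)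
    (hA : IsTwoSidedI A) (hB : IsTwoSidedI B) (h : A ⊓ B ≤ P) : A ≤ P ∨ B ≤ P :=
  hP.2.2 A B hA hB fun a ha b hb => h ⟨hA a ha b, B.mul_mem_left a hb⟩

theorem IsPrimeTS.exists_le_of_sInf_le {P : Ideal R} (hP : IsPrimeTS P) {S : Set (Ideal R)}
    (hS : S.Finite) (hS₂ : ∀ A ∈ S, IsTwoSidedI A) (h : sInf S ≤ P) : ∃ A ∈ S, A ≤ P := by
  induction S, hS using Set.Finite.induction_on with
  | empty => exact (hP.2.1 (top_le_iff.1 (sInf_empty (α := Ideal R) ▸ h))).elim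
  | @insert A S _ _ ih =>
    rw [sInf_insert] at h
    have hS₂' : ∀ B ∈ S, IsTwoSidedI B := fun B hB => hS₂ B (Set.mem_insert_of_mem A hB)
    rcases hP.le_or_le_of_inf_le (hS₂ A (Set.mem_insert A S)) (IsTwoSidedI.sInf hS₂') h with
      hAP | hSP
    · exact ⟨A, Set.mem_insert A S, hAP⟩
    · obtain ⟨B, hB, hBP⟩ := ih hS₂' hSP
      exact ⟨B, Set.mem_insert_of_mem A hB, hBP⟩

theorem exists_isPrimeTS_le [IsNoetherianRing R] {I : Ideal R} (hI : IsTwoSidedI I)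
    (htop : I ≠ ⊤) : ∃ P, IsPrimeTS P ∧ I ≤ P := by
  induction I using IsNoetherian.induction with | hgt I ih =>
  by_cases hprime : IsPrimeTS I
  · exact ⟨I, hprime, le_rfl⟩
  obtain ⟨A, B, hA, -, hAB, hAI, hBI⟩ := exists_of_not_isPrimeTS hI htop hprime
  have hIA : I ⊔ A ≠ ⊤ := fun h => hBI (le_of_sup_eq_top hI hAB h)
  obtain ⟨P, hP, hIAP⟩ := ih (I ⊔ A) (left_lt_sup.2 hAI) (hI.sup hA) hIA
  exact ⟨P, hP, le_sup_left.trans hIAP⟩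

theorem exists_finite_isPrimeTS_cover [IsNoetherianRing R] {I : Ideal R} (hI : IsTwoSidedI I) :
    ∃ S : Set (Ideal R), S.Finite ∧ (∀ A ∈ S, IsPrimeTS A ∧ I ≤ A) ∧
      ∀ P, IsPrimeTS P → I ≤ P → ∃ A ∈ S, A ≤ P := by
  induction I using IsNoetherian.induction with | hgt I ih =>
  by_cases htop : I = ⊤
  · refine ⟨∅, Set.finite_empty, by simp, fun P hP hIP => ?_⟩
    exact (hP.2.1 (top_le_iff.1 (htop ▸ hIP))).elim
  by_cases hprime : IsPrimeTS I
  · exact ⟨{I}, Set.finite_singleton I, by simp [hprime], fun P _ hIP => ⟨I, rfl, hIP⟩⟩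
  obtain ⟨A, B, hA, hB, hAB, hAI, hBI⟩ := exists_of_not_isPrimeTS hI htop hprime
  obtain ⟨SA, hSA, hSA_over, hSA_cover⟩ := ih (I ⊔ A) (left_lt_sup.2 hAI) (hI.sup hA)
  obtain ⟨SB, hSB, hSB_over, hSB_cover⟩ := ih (I ⊔ B) (left_lt_sup.2 hBI) (hI.sup hB)
  refine ⟨SA ∪ SB, hSA.union hSB, ?_, fun P hP hIP => ?_⟩
  · rintro C (hC | hC)
    exacts [⟨(hSA_over C hC).1, le_sup_left.trans (hSA_over C hC).2⟩,
      ⟨(hSB_over C hC).1, le_sup_left.trans (hSB_over C hC).2⟩]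
  rcases hP.2.2 A B hA hB fun a ha b hb => hIP (hAB a ha b hb) with hAP | hBP
  · obtain ⟨C, hC, hCP⟩ := hSA_cover P hP (sup_le hIP hAP)
    exact ⟨C, Or.inl hC, hCP⟩
  · obtain ⟨C, hC, hCP⟩ := hSB_cover P hP (sup_le hIP hBP)
    exact ⟨C, Or.inr hC, hCP⟩

theorem exists_minimal_isPrimeTS_le [IsNoetherianRing R] {I P : Ideal R} (hI : IsTwoSidedI I)
    (hP : IsPrimeTS P) (hIP : I ≤ P) : ∃ m ≤ P, Minimal (fun P' => IsPrimeTS P' ∧ I ≤ P') m := by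
  obtain ⟨S, hS, hS_over, hS_cover⟩ := exists_finite_isPrimeTS_cover hI
  obtain ⟨m, hm⟩ := (hS.sep (· ≤ P)).exists_minimal (hS_cover P hP hIP)
  refine ⟨m, hm.prop.2, hS_over m hm.prop.1, fun P' ⟨hP', hIP'⟩ hP'm => ?_⟩
  obtain ⟨A, hA, hAP'⟩ := hS_cover P' hP' hIP'
  exact (hm.le_of_le ⟨hA, hAP'.trans (hP'm.trans hm.prop.2)⟩ (hAP'.trans hP'm)).trans hAP'

variable (R) in
/-- `X` is `X-spec R` and `core P` is the paper's `(P : X)`. -/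
structure XSpecData where
  X : Set (Ideal R)
  isTwoSidedI_of_mem : ∀ Q ∈ X, IsTwoSidedI Q
  ne_top_of_mem : ∀ Q ∈ X, Q ≠ ⊤
  core : Ideal R → Ideal R
  core_mem : ∀ P, IsPrimeTS P → core P ∈ X
  core_le : ∀ P, IsPrimeTS P → core P ≤ P
  le_core : ∀ P, IsPrimeTS P → ∀ J, IsXSemiprime X J → J ≤ P → J ≤ core P
  core_eq_of_minimal : ∀ Q ∈ X, ∀ P, Minimal (fun P' => IsPrimeTS P' ∧ Q ≤ P') P → core P = Q

def primeZeroLocus (I : Ideal R) : Set (Ideal R) :=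
  {P | IsPrimeTS P ∧ I ≤ P}

theorem mem_primeZeroLocus {I P : Ideal R} : P ∈ primeZeroLocus I ↔ IsPrimeTS P ∧ I ≤ P :=
  Iff.rfl

namespace XSpecData

variable (D : XSpecData R)

def zeroLocus (I : Ideal R) : Set (Ideal R) :=
  {Q | Q ∈ D.X ∧ I ≤ Q}

theorem mem_zeroLocus {I Q : Ideal R} : Q ∈ D.zeroLocus I ↔ Q ∈ D.X ∧ I ≤ Q :=
  Iff.rfl

theorem le_core_of_mem {P Q : Ideal R} (hP : IsPrimeTS P) (hQ : Q ∈ D.X) (hQP : Q ≤ P) :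
    Q ≤ D.core P :=
  D.le_core P hP Q ⟨{Q}, Set.singleton_subset_iff.2 hQ, sInf_singleton.symm⟩ hQP

theorem exists_core_eq_of_le [IsNoetherianRing R] {P Q : Ideal R} (hP : IsPrimeTS P)
    (hQ : Q ∈ D.X) (hQP : Q ≤ P) : ∃ m, IsPrimeTS m ∧ m ≤ P ∧ D.core m = Q := by
  obtain ⟨m, hmP, hm⟩ := exists_minimal_isPrimeTS_le (D.isTwoSidedI_of_mem Q hQ) hP hQP
  exact ⟨m, hm.prop.1, hmP, D.core_eq_of_minimal Q hQ m hm⟩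

theorem exists_core_eq [IsNoetherianRing R] {Q : Ideal R} (hQ : Q ∈ D.X) :
    ∃ P, IsPrimeTS P ∧ D.core P = Q := by
  obtain ⟨M, hM, hQM⟩ := exists_isPrimeTS_le (D.isTwoSidedI_of_mem Q hQ) (D.ne_top_of_mem Q hQ)
  obtain ⟨P, hP, -, hPQ⟩ := D.exists_core_eq_of_le hM hQ hQM
  exact ⟨P, hP, hPQ⟩

theorem setOf_le_core_eq (I : Ideal R) :
    {P | IsPrimeTS P ∧ I ≤ D.core P} = primeZeroLocus (sInf (D.zeroLocus I)) := by
  ext P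
  refine ⟨fun ⟨hP, hIP⟩ => mem_primeZeroLocus.2 ⟨hP, ?_⟩, fun ⟨hP, hP'⟩ => ⟨hP, ?_⟩⟩
  · exact (sInf_le (D.mem_zeroLocus.2 ⟨D.core_mem P hP, hIP⟩)).trans (D.core_le P hP)
  · exact (le_sInf fun Q hQ => hQ.2).trans
      (D.le_core P hP _ ⟨D.zeroLocus I, fun Q hQ => hQ.1, rfl⟩ hP')

theorem setOf_core_mem_zeroLocus (I : Ideal R) :
    {P | IsPrimeTS P ∧ D.core P ∈ D.zeroLocus I} = {P | IsPrimeTS P ∧ I ≤ D.core P} := by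
  ext P
  exact ⟨fun ⟨hP, _, hIP⟩ => ⟨hP, hIP⟩, fun ⟨hP, hIP⟩ => ⟨hP, D.core_mem P hP, hIP⟩⟩

theorem isTwoSidedI_sInf_zeroLocus (I : Ideal R) : IsTwoSidedI (sInf (D.zeroLocus I)) :=
  IsTwoSidedI.sInf fun Q hQ => D.isTwoSidedI_of_mem Q hQ.1

theorem exists_image_core_eq_zeroLocus [IsNoetherianRing R] {I : Ideal R} (hI : IsTwoSidedI I)
    (hstable : ∀ P, IsPrimeTS P → (∃ P' ∈ primeZeroLocus I, D.core P' = D.core P) →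
      P ∈ primeZeroLocus I) :
    ∃ J, IsTwoSidedI J ∧ D.core '' primeZeroLocus I = D.zeroLocus J := by
  obtain ⟨S, hS, hS_over, hS_cover⟩ := exists_finite_isPrimeTS_cover hI
  have hcoreS : ∀ Q ∈ D.core '' S, IsTwoSidedI Q := by
    rintro _ ⟨A, hA, rfl⟩
    exact D.isTwoSidedI_of_mem _ (D.core_mem A (hS_over A hA).1)
  refine ⟨sInf (D.core '' S), IsTwoSidedI.sInf hcoreS, Set.Subset.antisymm ?_ ?_⟩
  · rintro _ ⟨P, ⟨hP, hIP⟩, rfl⟩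
    obtain ⟨A, hA, hAP⟩ := hS_cover P hP hIP
    have hA' := (hS_over A hA).1
    refine D.mem_zeroLocus.2 ⟨D.core_mem P hP, (sInf_le (Set.mem_image_of_mem _ hA)).trans ?_⟩
    exact D.le_core_of_mem hP (D.core_mem A hA') ((D.core_le A hA').trans hAP)
  · rintro Q ⟨hQ, hJQ⟩
    obtain ⟨m, hm, hmQ⟩ := D.exists_core_eq hQ
    obtain ⟨_, ⟨A, hA, rfl⟩, hAm⟩ := hm.exists_le_of_sInf_le (hS.image D.core) hcoreS
      (hJQ.trans (hmQ ▸ D.core_le m hm))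
    have hA' := (hS_over A hA).1
    obtain ⟨m', hm', hm'm, hm'A⟩ := D.exists_core_eq_of_le hm (D.core_mem A hA') hAm
    have hm'I : I ≤ m' := (hstable m' hm' ⟨A, hS_over A hA, hm'A.symm⟩).2
    exact ⟨m, mem_primeZeroLocus.2 ⟨hm, hm'I.trans hm'm⟩, hmQ⟩

theorem exists_eq_zeroLocus_of_preimage [IsNoetherianRing R] {V : Set (Ideal R)} (hV : V ⊆ D.X)
    {I : Ideal R} (hI : IsTwoSidedI I)
    (hpre : {P | IsPrimeTS P ∧ D.core P ∈ V} = primeZeroLocus I) :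
    ∃ J, IsTwoSidedI J ∧ V = D.zeroLocus J := by
  have hstable : ∀ P, IsPrimeTS P → (∃ P' ∈ primeZeroLocus I, D.core P' = D.core P) →
      P ∈ primeZeroLocus I := by
    rintro P hP ⟨P', hP', hPP'⟩
    rw [← hpre] at hP' ⊢
    exact ⟨hP, hPP' ▸ hP'.2⟩
  obtain ⟨J, hJ, himage⟩ := D.exists_image_core_eq_zeroLocus hI hstable
  refine ⟨J, hJ, ?_⟩
  rw [← himage, ← hpre]
  ext Q
  refine ⟨fun hQ => ?_, fun ⟨P, hP, hPQ⟩ => hPQ ▸ hP.2⟩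
  obtain ⟨P, hP, rfl⟩ := D.exists_core_eq (hV hQ)
  exact ⟨P, ⟨hP, hQ⟩, rfl⟩

end XSpecData

end

theorem stmt_2_general {R : Type*} [Ring R] [IsNoetherianRing R]
    (𝒳 : Set (Ideal R))
    (h𝒳ts : ∀ Q ∈ 𝒳, IsTwoSidedI Q) (h𝒳proper : ∀ Q ∈ 𝒳, Q ≠ ⊤)
    (q : Ideal R → Ideal R)
    (ha : ∀ P : Ideal R, IsPrimeTS P →
      q P ∈ 𝒳 ∧ q P ≤ P ∧ ∀ J, IsXSemiprime 𝒳 J → J ≤ P → J ≤ q P)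
    (hb : ∀ Q ∈ 𝒳, ∀ P : Ideal R, IsPrimeTS P → Q ≤ P →
      (∀ P', IsPrimeTS P' → Q ≤ P' → P' ≤ P → P' = P) → q P = Q) :
    -- (a) π is continuous: the preimage of every closed set of X-spec R is closed
    (∀ I : Ideal R, IsTwoSidedI I → ∃ I' : Ideal R, IsTwoSidedI I' ∧
        {P | IsPrimeTS P ∧ I ≤ q P} = {P | IsPrimeTS P ∧ I' ≤ P}) ∧
    -- (b) π maps π-stable closed subsets of spec R to closed subsets of X-spec R
    (∀ U : Set (Ideal R),
        (∀ P : Ideal R, IsPrimeTS P → (∃ P' ∈ U, q P' = q P) → P ∈ U) →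
        (∃ I : Ideal R, IsTwoSidedI I ∧ U = {P | IsPrimeTS P ∧ I ≤ P}) →
        ∃ I : Ideal R, IsTwoSidedI I ∧ q '' U = {Q | Q ∈ 𝒳 ∧ I ≤ Q}) ∧
    -- (c) π is a topological quotient map: it is surjective and a subset of X-spec R
    -- is closed iff its preimage is closed in spec R
    (∀ Q ∈ 𝒳, ∃ P : Ideal R, IsPrimeTS P ∧ q P = Q) ∧
    (∀ V ⊆ 𝒳,
        (∃ I : Ideal R, IsTwoSidedI I ∧ V = {Q | Q ∈ 𝒳 ∧ I ≤ Q}) ↔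
        (∃ I : Ideal R, IsTwoSidedI I ∧
          {P | IsPrimeTS P ∧ q P ∈ V} = {P | IsPrimeTS P ∧ I ≤ P})) := by
  let D : XSpecData R :=
    { X := 𝒳, isTwoSidedI_of_mem := h𝒳ts, ne_top_of_mem := h𝒳proper, core := q
      core_mem := fun P hP => (ha P hP).1
      core_le := fun P hP => (ha P hP).2.1
      le_core := fun P hP => (ha P hP).2.2
      core_eq_of_minimal := fun Q hQ P hP => hb Q hQ P hP.prop.1 hP.prop.2
        fun P' hP' hQP' hP'P => le_antisymm hP'P (hP.le_of_le ⟨hP', hQP'⟩ hP'P) }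
  refine ⟨fun I _ => ⟨_, D.isTwoSidedI_sInf_zeroLocus I, D.setOf_le_core_eq I⟩, ?_,
    fun Q hQ => D.exists_core_eq hQ, fun V hV => ⟨?_, ?_⟩⟩
  · rintro U hstable ⟨I, hI, rfl⟩
    exact D.exists_image_core_eq_zeroLocus hI hstable
  · rintro ⟨I, -, rfl⟩
    exact ⟨_, D.isTwoSidedI_sInf_zeroLocus I,
      (D.setOf_core_mem_zeroLocus I).trans (D.setOf_le_core_eq I)⟩
  · rintro ⟨I, hI, hpre⟩
    exact D.exists_eq_zeroLocus_of_preimage hV hI hpre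

/-- Proposition 1.7: the map `π : spec R → X-spec R`, `P ↦ (P : X)`,
(a) is continuous, (b) maps `π`-stable closed sets to closed sets, and (c) is a
topological quotient map.  Closedness is expressed via Zariski closed sets:
a subset of `spec R` is closed iff it is `V(I)` for an ideal `I`, and a subset of
`X-spec R` is closed iff it is `V_X(I)` for an ideal `I`. -/
theorem stmt_2 {R : Type*} [Ring R] [IsNoetherianRing R] [IsNoetherianRing Rᵐᵒᵖ]
    (𝒳 : Set (Ideal R)) (h𝒳ne : 𝒳.Nonempty)
    (h𝒳ts : ∀ Q ∈ 𝒳, IsTwoSidedI Q) (h𝒳proper : ∀ Q ∈ 𝒳, Q ≠ ⊤)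
    (q : Ideal R → Ideal R)
    (ha : ∀ P : Ideal R, IsPrimeTS P →
      q P ∈ 𝒳 ∧ q P ≤ P ∧ ∀ J, IsXSemiprime 𝒳 J → J ≤ P → J ≤ q P)
    (hb : ∀ Q ∈ 𝒳, ∀ P : Ideal R, IsPrimeTS P → Q ≤ P →
      (∀ P', IsPrimeTS P' → Q ≤ P' → P' ≤ P → P' = P) → q P = Q) :
    -- (a) π is continuous: the preimage of every closed set of X-spec R is closed
    (∀ I : Ideal R, IsTwoSidedI I → ∃ I' : Ideal R, IsTwoSidedI I' ∧
        {P | IsPrimeTS P ∧ I ≤ q P} = {P | IsPrimeTS P ∧ I' ≤ P}) ∧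
    -- (b) π maps π-stable closed subsets of spec R to closed subsets of X-spec R
    (∀ U : Set (Ideal R),
        (∀ P : Ideal R, IsPrimeTS P → (∃ P' ∈ U, q P' = q P) → P ∈ U) →
        (∃ I : Ideal R, IsTwoSidedI I ∧ U = {P | IsPrimeTS P ∧ I ≤ P}) →
        ∃ I : Ideal R, IsTwoSidedI I ∧ q '' U = {Q | Q ∈ 𝒳 ∧ I ≤ Q}) ∧
    -- (c) π is a topological quotient map: it is surjective and a subset of X-spec R
    -- is closed iff its preimage is closed in spec R
    (∀ Q ∈ 𝒳, ∃ P : Ideal R, IsPrimeTS P ∧ q P = Q) ∧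
    (∀ V ⊆ 𝒳,
        (∃ I : Ideal R, IsTwoSidedI I ∧ V = {Q | Q ∈ 𝒳 ∧ I ≤ Q}) ↔
        (∃ I : Ideal R, IsTwoSidedI I ∧
          {P | IsPrimeTS P ∧ q P ∈ V} = {P | IsPrimeTS P ∧ I ≤ P})) :=
  stmt_2_general 𝒳 h𝒳ts h𝒳proper q ha hb
end

section
/- Let G-spec R denote the set of G-prime ideals of R, equipped with the topology whose closed sets are exactly the sets V_G(I) = {Q ∈ G-spec R : Q ⊇ I} for ideals I of R. Then the map P ↦ (P : G) is a topological quotient map from spec R (with the Zariski topology) onto G-spec R, and the map M ↦ (M : G) is a topological quotient map from max R (with the relative Zariski topology) onto its image {(M : G) : M ∈ max R} ⊆ G-spec R (with the relative topology). -/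
/-- The translate of an ideal under the ring automorphism given by a group element
(expressed as a preimage, which for a group action gives the same family of translates). -/
def gTrans {R : Type*} [Ring R] {G : Type*} [Group G] [MulSemiringAction G R]
    (g : G) (I : Ideal R) : Ideal R :=
  Ideal.comap (MulSemiringAction.toRingHom G R g) I

/-- A `G`-ideal: a two-sided ideal stable under the action of `G`. -/
def IsGIdeal {R : Type*} [Ring R] (G : Type*) [Group G] [MulSemiringAction G R]
    (I : Ideal R) : Prop :=
  IsTwoSidedI I ∧ ∀ g : G, gTrans g I = I

/-- A `G`-prime ideal: a proper `G`-ideal `Q` with `IJ ⊆ Q → I ⊆ Q ∨ J ⊆ Q`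
for all `G`-ideals `I`, `J`. -/
def IsGPrime {R : Type*} [Ring R] (G : Type*) [Group G] [MulSemiringAction G R]
    (Q : Ideal R) : Prop :=
  IsGIdeal G Q ∧ Q ≠ ⊤ ∧
    ∀ I J : Ideal R, IsGIdeal G I → IsGIdeal G J →
      (∀ a ∈ I, ∀ b ∈ J, a * b ∈ Q) → I ≤ Q ∨ J ≤ Q

/-- `(I : G) = ⋂_{g ∈ G} g(I)`, the largest `G`-ideal contained in `I`. -/
noncomputable def resGIdeal {R : Type*} [Ring R] (G : Type*) [Group G] [MulSemiringAction G R]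
    (I : Ideal R) : Ideal R :=
  ⨅ g : G, gTrans g I

/-- A maximal (two-sided) ideal of a not-necessarily-commutative ring. -/
def IsMaxTS {R : Type*} [Ring R] (M : Ideal R) : Prop :=
  IsTwoSidedI M ∧ M ≠ ⊤ ∧ ∀ J : Ideal R, IsTwoSidedI J → M < J → J = ⊤

/-!
The `G`-core `(I : G) = ⋂ g(I)` is right adjoint to `I ↦ G • I = Σ g(I)`, the `G`-ideal
generated by `I`: `I ⊆ (P : G)` iff `G • I ⊆ P`. Hence the preimage of a closed set `V_G(I)`
is the Zariski closed set `V(G • I)`. Conversely, if the preimage of `V` is `V(I)`, then, as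
`(g(P) : G) = (P : G)`, the point `Q = (P : G)` lies in `V` iff every translate `g(P)` does,
iff `I ⊆ ⋂ g(P) = Q`; so `V = V_G(I)`. This only uses that the set of primes (or of maximal
ideals) is stable under `G`. Surjectivity onto `G-spec R` comes from a `P ⊇ Q` maximal with
`(P : G) = Q`, which exists by noetherianity and is prime because `Q` is `G`-prime.
-/

section

variable {R : Type*} [Ring R] {G : Type*} [Group G] [MulSemiringAction G R]

theorem mem_gTrans {g : G} {I : Ideal R} {r : R} : r ∈ gTrans g I ↔ g • r ∈ I := Iff.rfl

theorem gTrans_inv_gTrans (g : G) (I : Ideal R) : gTrans g⁻¹ (gTrans g I) = I := by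
  ext r
  simp [mem_gTrans]

theorem gTrans_le_iff {g : G} {I J : Ideal R} : gTrans g I ≤ J ↔ I ≤ gTrans g⁻¹ J :=
  ⟨fun h a ha => h (show g • g⁻¹ • a ∈ I by rwa [smul_inv_smul]),
    fun h a ha => by simpa [mem_gTrans] using h ha⟩

theorem gTrans_eq_top_iff {g : G} {I : Ideal R} : gTrans g I = ⊤ ↔ I = ⊤ := by
  simp only [Ideal.eq_top_iff_one, mem_gTrans, smul_one]

theorem isTwoSidedI_gTrans {I : Ideal R} (hI : IsTwoSidedI I) (g : G) :
    IsTwoSidedI (gTrans g I) := fun a ha r => by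
  rw [mem_gTrans, smul_mul']
  exact hI _ ha _

theorem mul_mem_gTrans {I J K : Ideal R} (h : ∀ a ∈ I, ∀ b ∈ J, a * b ∈ K) (g : G) :
    ∀ a ∈ gTrans g I, ∀ b ∈ gTrans g J, a * b ∈ gTrans g K := fun a ha b hb => by
  rw [mem_gTrans, smul_mul']
  exact h _ ha _ hb

theorem isPrimeTS_gTrans {P : Ideal R} (hP : IsPrimeTS P) (g : G) : IsPrimeTS (gTrans g P) := by
  obtain ⟨hts, hne, hprime⟩ := hP
  refine ⟨isTwoSidedI_gTrans hts g, gTrans_eq_top_iff.not.mpr hne, fun I J hI hJ hIJ => ?_⟩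
  have hIJ' := mul_mem_gTrans hIJ g⁻¹
  rw [gTrans_inv_gTrans] at hIJ'
  refine (hprime _ _ (isTwoSidedI_gTrans hI g⁻¹) (isTwoSidedI_gTrans hJ g⁻¹) hIJ').imp ?_ ?_ <;>
    exact fun h => by simpa using gTrans_le_iff.mp h

theorem isMaxTS_gTrans {M : Ideal R} (hM : IsMaxTS M) (g : G) : IsMaxTS (gTrans g M) := by
  obtain ⟨hts, hne, hmax⟩ := hM
  refine ⟨isTwoSidedI_gTrans hts g, gTrans_eq_top_iff.not.mpr hne, fun J hJ hlt => ?_⟩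
  have hlt' : M < gTrans g⁻¹ J :=
    lt_of_le_not_ge (gTrans_le_iff.mp hlt.le) fun hle =>
      hlt.not_ge (by simpa using gTrans_le_iff.mp hle)
  exact gTrans_eq_top_iff.mp (hmax _ (isTwoSidedI_gTrans hJ g⁻¹) hlt')

theorem mem_resGIdeal {I : Ideal R} {r : R} : r ∈ resGIdeal G I ↔ ∀ g : G, g • r ∈ I := by
  simp only [resGIdeal, Ideal.mem_iInf, mem_gTrans]

theorem resGIdeal_le (I : Ideal R) : resGIdeal G I ≤ I := fun r hr => by
  simpa using mem_resGIdeal.mp hr 1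

theorem resGIdeal_eq_top_iff {I : Ideal R} : resGIdeal G I = ⊤ ↔ I = ⊤ := by
  simp only [Ideal.eq_top_iff_one, mem_resGIdeal, smul_one, forall_const]

theorem le_resGIdeal_of_le {I P : Ideal R} (hI : ∀ g : G, gTrans g I = I) (h : I ≤ P) :
    I ≤ resGIdeal G P := fun _ ha =>
  mem_resGIdeal.mpr fun g => h (mem_gTrans.mp ((hI g).symm ▸ ha))

theorem gTrans_resGIdeal (g : G) (I : Ideal R) : gTrans g (resGIdeal G I) = resGIdeal G I := by
  ext r
  simp only [mem_gTrans, mem_resGIdeal, smul_smul]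
  exact ⟨fun h h' => by simpa using h (h' * g⁻¹), fun h h' => h (h' * g)⟩

theorem resGIdeal_gTrans (g : G) (I : Ideal R) : resGIdeal G (gTrans g I) = resGIdeal G I := by
  ext r
  simp only [mem_resGIdeal, mem_gTrans, smul_smul]
  exact ⟨fun h h' => by simpa using h (g⁻¹ * h'), fun h h' => h (g * h')⟩

theorem isGIdeal_resGIdeal {I : Ideal R} (hI : IsTwoSidedI I) : IsGIdeal G (resGIdeal G I) :=
  ⟨fun a ha r => mem_resGIdeal.mpr fun g => by
      rw [smul_mul']
      exact hI _ (mem_resGIdeal.mp ha g) _,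
    fun g => gTrans_resGIdeal g I⟩

theorem mul_mem_resGIdeal {I J K : Ideal R} (h : ∀ a ∈ I, ∀ b ∈ J, a * b ∈ K) :
    ∀ a ∈ resGIdeal G I, ∀ b ∈ resGIdeal G J, a * b ∈ resGIdeal G K := fun a ha b hb =>
  mem_resGIdeal.mpr fun g => by
    rw [smul_mul']
    exact h _ (mem_resGIdeal.mp ha g) _ (mem_resGIdeal.mp hb g)

variable (G) in
noncomputable def gSup (I : Ideal R) : Ideal R :=
  ⨆ g : G, gTrans g I

theorem gc_gSup_resGIdeal : GaloisConnection (gSup G) (resGIdeal G : Ideal R → Ideal R) :=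
  fun I P => by
    simp only [gSup, resGIdeal, iSup_le_iff, le_iInf_iff, gTrans_le_iff]
    exact ⟨fun h g => by simpa using h g⁻¹, fun h g => h g⁻¹⟩

theorem isTwoSidedI_gSup {I : Ideal R} (hI : IsTwoSidedI I) : IsTwoSidedI (gSup G I) := by
  intro a ha r
  refine Submodule.iSup_induction (motive := fun a => a * r ∈ gSup G I) _ ha ?_ ?_ ?_
  · exact fun g x hx => Ideal.mem_iSup_of_mem g (isTwoSidedI_gTrans hI g _ hx r)
  · simp
  · exact fun x y hx hy => by simpa only [add_mul] using Ideal.add_mem _ hx hy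

theorem isTwoSidedI_sup {I J : Ideal R} (hI : IsTwoSidedI I) (hJ : IsTwoSidedI J) :
    IsTwoSidedI (I ⊔ J) := fun a ha r => by
  obtain ⟨i, hi, j, hj, rfl⟩ := Submodule.mem_sup.mp ha
  rw [add_mul]
  exact Submodule.add_mem_sup (hI _ hi r) (hJ _ hj r)

theorem mul_mem_of_mem_sup {P I J : Ideal R} (hP : IsTwoSidedI P)
    (hIJ : ∀ a ∈ I, ∀ b ∈ J, a * b ∈ P) : ∀ a ∈ P ⊔ I, ∀ b ∈ P ⊔ J, a * b ∈ P := by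
  intro a ha b hb
  obtain ⟨p, hp, i, hi, rfl⟩ := Submodule.mem_sup.mp ha
  obtain ⟨q, hq, j, hj, rfl⟩ := Submodule.mem_sup.mp hb
  rw [add_mul, mul_add i]
  exact P.add_mem (hP _ hp _) (P.add_mem (P.mul_mem_left _ hq) (hIJ i hi j hj))

theorem isGPrime_resGIdeal {P : Ideal R} (hP : IsPrimeTS P) : IsGPrime G (resGIdeal G P) := by
  obtain ⟨hts, hne, hprime⟩ := hP
  refine ⟨isGIdeal_resGIdeal hts, resGIdeal_eq_top_iff.not.mpr hne, fun I J hI hJ hIJ => ?_⟩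
  exact (hprime I J hI.1 hJ.1 fun a ha b hb => resGIdeal_le P (hIJ a ha b hb)).imp
    (le_resGIdeal_of_le hI.2) (le_resGIdeal_of_le hJ.2)

theorem exists_isPrimeTS_resGIdeal_eq [IsNoetherianRing R] {Q : Ideal R} (hQ : IsGPrime G Q) :
    ∃ P : Ideal R, IsPrimeTS P ∧ resGIdeal G P = Q := by
  obtain ⟨⟨hQts, hQG⟩, hQne, hQprime⟩ := hQ
  obtain ⟨P, ⟨hPts, hQP, hPQ⟩, hPmax⟩ := set_has_maximal_iff_noetherian.mpr inferInstance
    {K : Ideal R | IsTwoSidedI K ∧ Q ≤ K ∧ resGIdeal G K ≤ Q} ⟨Q, hQts, le_rfl, resGIdeal_le Q⟩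
  have hres : resGIdeal G P = Q := hPQ.antisymm (le_resGIdeal_of_le hQG hQP)
  have hgrow (K : Ideal R) (hK : IsTwoSidedI K) (hKP : ¬K ≤ P) : ¬resGIdeal G (P ⊔ K) ≤ Q :=
    fun hle => hPmax _ ⟨isTwoSidedI_sup hPts hK, hQP.trans le_sup_left, hle⟩ (left_lt_sup.mpr hKP)
  refine ⟨P, ⟨hPts, fun hP => hQne ?_, fun I J hI hJ hIJ => ?_⟩, hres⟩
  · rwa [← hres, resGIdeal_eq_top_iff]
  by_contra! h
  have hcore := mul_mem_resGIdeal (G := G) (mul_mem_of_mem_sup hPts hIJ)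
  rw [hres] at hcore
  rcases hQprime _ _ (isGIdeal_resGIdeal (isTwoSidedI_sup hPts hI))
    (isGIdeal_resGIdeal (isTwoSidedI_sup hPts hJ)) hcore with hle | hle
  exacts [hgrow I hI h.1 hle, hgrow J hJ h.2 hle]

theorem resGIdeal_closed_iff_preimage_closed {X Y V : Set (Ideal R)}
    (hX : ∀ P ∈ X, ∀ g : G, gTrans g P ∈ X) (hY : resGIdeal G '' X = Y) (hV : V ⊆ Y) :
    (∃ I : Ideal R, IsTwoSidedI I ∧ V = {Q | Q ∈ Y ∧ I ≤ Q}) ↔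
      ∃ I : Ideal R, IsTwoSidedI I ∧ {P | P ∈ X ∧ resGIdeal G P ∈ V} = {P | P ∈ X ∧ I ≤ P} := by
  subst hY
  constructor
  · rintro ⟨I, hI, rfl⟩
    refine ⟨gSup G I, isTwoSidedI_gSup hI, Set.ext fun P => ?_⟩
    simp only [Set.mem_ofPred_eq, ← gc_gSup_resGIdeal.le_iff_le]
    exact ⟨fun ⟨hP, _, hle⟩ => ⟨hP, hle⟩, fun ⟨hP, hle⟩ => ⟨hP, ⟨P, hP, rfl⟩, hle⟩⟩
  · rintro ⟨I, hI, hpre⟩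
    refine ⟨I, hI, Set.ext fun Q => ⟨fun hQ => ⟨hV hQ, ?_⟩, ?_⟩⟩
    · obtain ⟨P, hP, rfl⟩ := hV hQ
      refine le_iInf fun g => ?_
      have hgP : gTrans g P ∈ {P | P ∈ X ∧ resGIdeal G P ∈ V} :=
        ⟨hX P hP g, by rwa [resGIdeal_gTrans]⟩
      exact (hpre ▸ hgP).2
    · rintro ⟨⟨P, hP, rfl⟩, hle⟩
      have hP' : P ∈ {P | P ∈ X ∧ I ≤ P} := ⟨hP, hle.trans (resGIdeal_le P)⟩
      exact (hpre ▸ hP').2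

end

theorem stmt_5_general {R : Type*} [Ring R] [IsNoetherianRing R]
    (G : Type*) [Group G] [MulSemiringAction G R] :
    -- the map is well defined into G-spec R and surjective onto it
    (∀ P : Ideal R, IsPrimeTS P → IsGPrime G (resGIdeal G P)) ∧
    (∀ Q : Ideal R, IsGPrime G Q → ∃ P : Ideal R, IsPrimeTS P ∧ resGIdeal G P = Q) ∧
    -- quotient topology condition on spec R → G-spec R
    (∀ V ⊆ {Q : Ideal R | IsGPrime G Q},
        (∃ I : Ideal R, IsTwoSidedI I ∧ V = {Q | IsGPrime G Q ∧ I ≤ Q}) ↔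
        (∃ I : Ideal R, IsTwoSidedI I ∧
          {P | IsPrimeTS P ∧ resGIdeal G P ∈ V} = {P | IsPrimeTS P ∧ I ≤ P})) ∧
    -- quotient topology condition on max R → {(M : G) : M ∈ max R}
    (∀ V ⊆ {Q : Ideal R | ∃ M : Ideal R, IsMaxTS M ∧ resGIdeal G M = Q},
        (∃ I : Ideal R, IsTwoSidedI I ∧
          V = {Q | (∃ M : Ideal R, IsMaxTS M ∧ resGIdeal G M = Q) ∧ I ≤ Q}) ↔
        (∃ I : Ideal R, IsTwoSidedI I ∧
          {M | IsMaxTS M ∧ resGIdeal G M ∈ V} = {M | IsMaxTS M ∧ I ≤ M})) := by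
  have hspec : resGIdeal G '' {P : Ideal R | IsPrimeTS P} = {Q | IsGPrime G Q} :=
    Set.ext fun Q => ⟨by rintro ⟨P, hP, rfl⟩; exact isGPrime_resGIdeal hP,
      exists_isPrimeTS_resGIdeal_eq⟩
  exact ⟨fun P => isGPrime_resGIdeal, fun Q => exists_isPrimeTS_resGIdeal_eq,
    fun V => resGIdeal_closed_iff_preimage_closed (fun P => isPrimeTS_gTrans) hspec,
    fun V => resGIdeal_closed_iff_preimage_closed (fun M => isMaxTS_gTrans) rfl⟩

/-- 1.11: `P ↦ (P : G)` is a topological quotient map from `spec R` onto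
`G-spec R`, and `M ↦ (M : G)` is a topological quotient map from `max R` onto its image
`{(M : G) : M ∈ max R} ⊆ G-spec R` (with the relative topology).  Closedness is expressed
via Zariski closed sets. -/
theorem stmt_5 {R : Type*} [Ring R] [IsNoetherianRing R] [IsNoetherianRing Rᵐᵒᵖ]
    (G : Type*) [Group G] [MulSemiringAction G R] :
    -- the map is well defined into G-spec R and surjective onto it
    (∀ P : Ideal R, IsPrimeTS P → IsGPrime G (resGIdeal G P)) ∧
    (∀ Q : Ideal R, IsGPrime G Q → ∃ P : Ideal R, IsPrimeTS P ∧ resGIdeal G P = Q) ∧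
    -- quotient topology condition on spec R → G-spec R
    (∀ V ⊆ {Q : Ideal R | IsGPrime G Q},
        (∃ I : Ideal R, IsTwoSidedI I ∧ V = {Q | IsGPrime G Q ∧ I ≤ Q}) ↔
        (∃ I : Ideal R, IsTwoSidedI I ∧
          {P | IsPrimeTS P ∧ resGIdeal G P ∈ V} = {P | IsPrimeTS P ∧ I ≤ P})) ∧
    -- quotient topology condition on max R → {(M : G) : M ∈ max R}
    (∀ V ⊆ {Q : Ideal R | ∃ M : Ideal R, IsMaxTS M ∧ resGIdeal G M = Q},
        (∃ I : Ideal R, IsTwoSidedI I ∧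
          V = {Q | (∃ M : Ideal R, IsMaxTS M ∧ resGIdeal G M = Q) ∧ I ≤ Q}) ↔
        (∃ I : Ideal R, IsTwoSidedI I ∧
          {M | IsMaxTS M ∧ resGIdeal G M ∈ V} = {M | IsMaxTS M ∧ I ≤ M})) :=
  stmt_5_general G
end

section
/- The assignment P ↦ (P : 𝒢) is an H-equivariant topological quotient map from spec R onto 𝒢-spec R; that is, the map is surjective, h(P : 𝒢) = (h(P) : 𝒢) for all h ∈ H and P ∈ spec R, and a subset V ⊆ 𝒢-spec R is closed if and only if its preimage is closed in spec R. -/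
open MvPolynomial

/-- The action of `h ∈ (kˣ)ⁿ` on `k[y₁,…,yₙ]` by `yᵢ ↦ hᵢ yᵢ`. -/
noncomputable def tact {k : Type*} [CommSemiring k] {n : ℕ} (h : Fin n → kˣ) :
    MvPolynomial (Fin n) k →ₐ[k] MvPolynomial (Fin n) k :=
  aeval fun i => (h i : k) • X i

/-- `(I : G) = ⋂_{g ∈ G} g(I)` for a subgroup `G` of the torus `(kˣ)ⁿ`. -/
noncomputable def resT {k : Type*} [CommSemiring k] {n : ℕ} (G : Subgroup (Fin n → kˣ))
    (I : Ideal (MvPolynomial (Fin n) k)) : Ideal (MvPolynomial (Fin n) k) :=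
  ⨅ g ∈ G, Ideal.comap (tact g) I

/-- `spec_w R`: primes `P` with `P ∩ {y₁,…,yₙ} = {yᵢ : i ∈ w}`. -/
def specW (k : Type*) [CommSemiring k] {n : ℕ} (w : Set (Fin n)) :
    Set (Ideal (MvPolynomial (Fin n) k)) :=
  {P | P.IsPrime ∧ ∀ i, X i ∈ P ↔ i ∈ w}

/-- `max_w R = max R ∩ spec_w R`. -/
def maxW (k : Type*) [CommSemiring k] {n : ℕ} (w : Set (Fin n)) :
    Set (Ideal (MvPolynomial (Fin n) k)) :=
  {M | M.IsMaximal ∧ ∀ i, X i ∈ M ↔ i ∈ w}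

/-- `𝒢-spec_w R = {(P : G_w) : P ∈ spec_w R}`. -/
def GspecW {k : Type*} [CommSemiring k] {n : ℕ}
    (G : Set (Fin n) → Subgroup (Fin n → kˣ)) (w : Set (Fin n)) :
    Set (Ideal (MvPolynomial (Fin n) k)) :=
  {Q | ∃ P ∈ specW k w, Q = resT (G w) P}

/-- `𝒢-spec R`, the set of `𝒢`-prime ideals. -/
def GspecAll {k : Type*} [CommSemiring k] {n : ℕ}
    (G : Set (Fin n) → Subgroup (Fin n → kˣ)) :
    Set (Ideal (MvPolynomial (Fin n) k)) :=
  ⋃ w, GspecW G w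

/-- `𝒢`-semiprime ideals: intersections of collections of `𝒢`-prime ideals. -/
def GSemiprime {k : Type*} [CommSemiring k] {n : ℕ}
    (G : Set (Fin n) → Subgroup (Fin n → kˣ))
    (J : Ideal (MvPolynomial (Fin n) k)) : Prop :=
  ∃ T ⊆ GspecAll G, J = sInf T

/-- `𝒢-max_w R = {(M : G_w) : M ∈ max_w R}`. -/
def GmaxW {k : Type*} [CommSemiring k] {n : ℕ}
    (G : Set (Fin n) → Subgroup (Fin n → kˣ)) (w : Set (Fin n)) :
    Set (Ideal (MvPolynomial (Fin n) k)) :=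
  {Q | ∃ M ∈ maxW k w, Q = resT (G w) M}

/-- `𝒢-max R`. -/
def GmaxAll {k : Type*} [CommSemiring k] {n : ℕ}
    (G : Set (Fin n) → Subgroup (Fin n → kˣ)) :
    Set (Ideal (MvPolynomial (Fin n) k)) :=
  ⋃ w, GmaxW G w

/-- `P ↦ (P : 𝒢)`, i.e. `(P : G_w)` where `w = {i : yᵢ ∈ P}`. -/
noncomputable def Gquot {k : Type*} [CommSemiring k] {n : ℕ}
    (G : Set (Fin n) → Subgroup (Fin n → kˣ))
    (P : Ideal (MvPolynomial (Fin n) k)) : Ideal (MvPolynomial (Fin n) k) :=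
  resT (G {i | X i ∈ P}) P


section Aux

variable {k : Type*} [CommSemiring k] {n : ℕ}

lemma tact_X (h : Fin n → kˣ) (i : Fin n) :
    tact h (X i : MvPolynomial (Fin n) k) = C (h i : k) * X i := by
  simp [tact, smul_eq_C_mul]

lemma tact_comp (g h : Fin n → kˣ) :
    (tact (k := k) (n := n) g).comp (tact h) = tact (h * g) := by
  apply MvPolynomial.algHom_ext
  intro i
  simp [tact, smul_eq_C_mul, mul_comm, mul_left_comm, mul_assoc]

lemma tact_tact (g h : Fin n → kˣ) (x : MvPolynomial (Fin n) k) :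
    tact g (tact h x) = tact (h * g) x := by
  rw [← tact_comp]; rfl

lemma tact_one : tact (1 : Fin n → kˣ) = AlgHom.id k (MvPolynomial (Fin n) k) := by
  apply MvPolynomial.algHom_ext
  intro i
  simp [tact]

lemma mem_resT {G : Subgroup (Fin n → kˣ)} {I : Ideal (MvPolynomial (Fin n) k)}
    {x : MvPolynomial (Fin n) k} :
    x ∈ resT G I ↔ ∀ g ∈ G, tact g x ∈ I := by
  simp [resT, Ideal.mem_iInf, Ideal.mem_comap]

lemma resT_le {G : Subgroup (Fin n → kˣ)} {P : Ideal (MvPolynomial (Fin n) k)} :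
    resT G P ≤ P := by
  intro x hx
  have h1 := mem_resT.mp hx 1 G.one_mem
  rwa [tact_one] at h1

lemma le_resT {I : Ideal (MvPolynomial (Fin n) k)} {G : Subgroup (Fin n → kˣ)}
    {P : Ideal (MvPolynomial (Fin n) k)} :
    I ≤ resT G P ↔ ∀ g ∈ G, I ≤ Ideal.comap (tact g) P := by
  simp [resT, le_iInf_iff]

lemma X_mem_comap_tact (h : Fin n → kˣ) (P : Ideal (MvPolynomial (Fin n) k)) (i : Fin n) :
    X i ∈ Ideal.comap (tact h) P ↔ X i ∈ P := by
  rw [Ideal.mem_comap, tact_X, Ideal.unit_mul_mem_iff_mem _ ((h i).isUnit.map C)]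

lemma wset_comap (h : Fin n → kˣ) (P : Ideal (MvPolynomial (Fin n) k)) :
    {i | X i ∈ Ideal.comap (tact h) P} = {i | X i ∈ P} :=
  Set.ext fun i => X_mem_comap_tact h P i

lemma wset_eq {P : Ideal (MvPolynomial (Fin n) k)} {w : Set (Fin n)}
    (h : ∀ i, X i ∈ P ↔ i ∈ w) : {i | X i ∈ P} = w :=
  Set.ext h

lemma resT_comap_mem {G : Subgroup (Fin n → kˣ)} {g : Fin n → kˣ} (hg : g ∈ G)
    (P : Ideal (MvPolynomial (Fin n) k)) :
    resT G (Ideal.comap (tact g) P) = resT G P := by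
  ext x
  simp only [mem_resT, Ideal.mem_comap, tact_tact]
  constructor
  · intro H g'' hg''
    have := H (g'' * g⁻¹) (G.mul_mem hg'' (G.inv_mem hg))
    rwa [inv_mul_cancel_right] at this
  · intro H g' hg'
    exact H (g' * g) (G.mul_mem hg' hg)

lemma Gquot_mem_GspecAll (G : Set (Fin n) → Subgroup (Fin n → kˣ))
    (P : Ideal (MvPolynomial (Fin n) k)) (hP : P.IsPrime) :
    Gquot G P ∈ GspecAll G :=
  Set.mem_iUnion.mpr ⟨{i | X i ∈ P}, P, ⟨hP, fun _ => Iff.rfl⟩, rfl⟩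

end Aux

section AuxField

variable {k : Type*} [Field k] {n : ℕ}

lemma resT_comap (G : Subgroup (Fin n → kˣ)) (h : Fin n → kˣ)
    (P : Ideal (MvPolynomial (Fin n) k)) :
    resT G (Ideal.comap (tact h) P) = Ideal.comap (tact h) (resT G P) := by
  ext x
  simp only [mem_resT, Ideal.mem_comap, tact_tact]
  exact forall₂_congr fun g _ => by rw [mul_comm]

end AuxField

/-- Proposition 2.4: `P ↦ (P : 𝒢)` is an `H`-equivariant topological
quotient map from `spec R` onto `𝒢-spec R`: it maps into and onto `𝒢-spec R`, is
`H`-equivariant, and a subset of `𝒢-spec R` is closed iff its preimage is closed. -/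
theorem stmt_9 {k : Type*} [Field k] {n : ℕ}
    (G : Set (Fin n) → Subgroup (Fin n → kˣ))
    (hcompat : ∀ v w : Set (Fin n), v ⊆ w → ∀ P ∈ specW k w,
      resT (G v) P ≤ resT (G w) P) :
    -- well defined into 𝒢-spec R, and surjective
    (∀ P : Ideal (MvPolynomial (Fin n) k), P.IsPrime → Gquot G P ∈ GspecAll G) ∧
    (∀ Q ∈ GspecAll (k := k) G, ∃ P : Ideal (MvPolynomial (Fin n) k),
        P.IsPrime ∧ Gquot G P = Q) ∧
    -- H-equivariance
    (∀ h : Fin n → kˣ, ∀ P : Ideal (MvPolynomial (Fin n) k), P.IsPrime →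
        Gquot G (Ideal.comap (tact h) P) = Ideal.comap (tact h) (Gquot G P)) ∧
    -- quotient topology condition
    (∀ V ⊆ GspecAll (k := k) G,
        (∃ I : Ideal (MvPolynomial (Fin n) k), V = {Q | Q ∈ GspecAll G ∧ I ≤ Q}) ↔
        (∃ I : Ideal (MvPolynomial (Fin n) k),
          {P | P.IsPrime ∧ Gquot G P ∈ V} = {P | P.IsPrime ∧ I ≤ P})) := by
  constructor
  · exact fun P hP => Gquot_mem_GspecAll G P hP
  constructor
  · intro Q hQ
    simp only [GspecAll, GspecW, Set.mem_iUnion, Set.mem_setOf_eq] at hQ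
    obtain ⟨w, P, hP, hQeq⟩ := hQ
    exact ⟨P, hP.1, by rw [Gquot, wset_eq hP.2, ← hQeq]⟩
  constructor
  · intro h P _
    unfold Gquot
    rw [wset_comap, resT_comap]
  · intro V hV
    constructor
    · rintro ⟨I, rfl⟩
      haveI : Fintype (Set (Fin n)) := Set.fintype
      set K : Set (Fin n) → Ideal (MvPolynomial (Fin n) k) := fun v =>
        (⨆ g ∈ G v, Ideal.map (tact g) I) ⊔ Ideal.span (X '' v) with hK
      refine ⟨⨅ v, K v, ?_⟩
      ext P
      simp only [Set.mem_setOf_eq]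
      refine and_congr_right fun hP => ?_
      have hw : ∀ i, X i ∈ P ↔ i ∈ {i | X i ∈ P} := fun _ => Iff.rfl
      have hKle : ∀ v : Set (Fin n),
          K v ≤ P ↔ (I ≤ resT (G v) P ∧ v ⊆ {i | X i ∈ P}) := by
        intro v
        rw [hK]
        simp only [sup_le_iff, iSup_le_iff, Ideal.map_le_iff_le_comap, Ideal.span_le,
          Set.image_subset_iff, le_resT]
        rfl
      have hinf : (⨅ v, K v) ≤ P ↔ ∃ v, K v ≤ P := by
        constructor
        · intro hle
          have huniv : (⨅ v, K v) = Finset.univ.inf K := by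
            simp [Finset.inf_eq_iInf]
          rw [huniv] at hle
          obtain ⟨v, _, hv⟩ := (Ideal.IsPrime.inf_le' hP).mp hle
          exact ⟨v, hv⟩
        · rintro ⟨v, hv⟩
          exact le_trans (iInf_le K v) hv
      rw [and_iff_right (Gquot_mem_GspecAll G P hP), hinf]
      constructor
      · intro hle
        exact ⟨{i | X i ∈ P}, (hKle _).mpr ⟨hle, fun _ hi => hi⟩⟩
      · rintro ⟨v, hv⟩
        obtain ⟨hI, hvw⟩ := (hKle v).mp hv
        exact le_trans hI (hcompat v {i | X i ∈ P} hvw P ⟨hP, hw⟩)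
    · rintro ⟨I, hIeq⟩
      refine ⟨I, ?_⟩
      ext Q
      simp only [Set.mem_setOf_eq]
      constructor
      · intro hQV
        have hQall := hV hQV
        refine ⟨hQall, ?_⟩
        have hQall' := hQall
        simp only [GspecAll, GspecW, Set.mem_iUnion, Set.mem_setOf_eq] at hQall'
        obtain ⟨w, P, hP, rfl⟩ := hQall'
        rw [le_resT]
        intro g hg
        haveI := hP.1
        have hprime : (Ideal.comap (tact g) P).IsPrime := Ideal.IsPrime.comap _
        have hGq : Gquot G (Ideal.comap (tact g) P) = resT (G w) P := by
          unfold Gquot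
          rw [wset_comap, wset_eq hP.2, resT_comap_mem hg]
        have hmem : Ideal.comap (tact g) P ∈
            {P : Ideal (MvPolynomial (Fin n) k) | P.IsPrime ∧ Gquot G P ∈ V} :=
          ⟨hprime, by rw [hGq]; exact hQV⟩
        rw [hIeq] at hmem
        exact hmem.2
      · rintro ⟨hQall, hIQ⟩
        have hQall' := hQall
        simp only [GspecAll, GspecW, Set.mem_iUnion, Set.mem_setOf_eq] at hQall'
        obtain ⟨w, P, hP, rfl⟩ := hQall'
        have hGq : Gquot G P = resT (G w) P := by
          unfold Gquot; rw [wset_eq hP.2]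
        have hIP : I ≤ P := le_trans hIQ resT_le
        have hmem : P ∈ {P : Ideal (MvPolynomial (Fin n) k) | P.IsPrime ∧ I ≤ P} :=
          ⟨hP.1, hIP⟩
        rw [← hIeq] at hmem
        rw [← hGq]
        exact hmem.2
end
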